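/- arXiv:1803.02391 — 2 statements merged into one kernel-verified Lean document; each statement's English description precedes it below -/
import Mathlib

section
/- Let k > 0 and let (d^n), (g^n), (h^n) be sequences of nonnegative reals satisfying (d^{n+1} - d^n)/k ≤ g^n d^n + h^n for all n ≥ 0. Suppose for a fixed r ∈ ℕ with t_r := kr > 0 there exist constants a₁, a₂, a₃ such that for every integer n₀ ≥ 0: k·∑_{n=n₀}^{n₀+r-1} g^n ≤ a₁, k·∑_{n=n₀}^{n₀+r-1} h^n ≤ a₂, and k·∑_{n=n₀}^{n₀+r-1} d^n ≤ a₃. Then for all n ≥ r, d^n ≤ (a₂ + a₃/t_r)·exp(a₁). -/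
open Finset

/-!
Rewriting the recurrence as `d (n+1) ≤ (1 + k g n) d n + k h n`, the discrete Grönwall
inequality started at any `m` in the window `[n - r, n)` gives
`d n ≤ (d m + a₂) exp a₁`. Averaging this over the `r` starting points of the window
replaces `d m` by the window mean of `d`, which is at most `a₃ / (k r)`.
-/

lemma sum_Ico_add_le_sum_range_add {f : ℕ → ℝ} (hf : ∀ n, 0 ≤ f n) (n₀ i r : ℕ) :
    ∑ j ∈ Ico (n₀ + i) (n₀ + r), f j ≤ ∑ j ∈ range r, f (n₀ + j) := by
  calc ∑ j ∈ Ico (n₀ + i) (n₀ + r), f j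
      ≤ ∑ j ∈ Ico n₀ (n₀ + r), f j :=
        sum_le_sum_of_subset_of_nonneg (Ico_subset_Ico (by omega) le_rfl) fun j _ _ => hf j
    _ = ∑ j ∈ range r, f (n₀ + j) := by rw [sum_Ico_eq_sum_range, Nat.add_sub_cancel_left]

section UniformGronwall

variable {d b c : ℕ → ℝ} (hd : ∀ n, 0 ≤ d n) (hb : ∀ n, 0 ≤ b n) (hc : ∀ n, 0 ≤ c n)
  (hu : ∀ n, d (n + 1) ≤ (1 + c n) * d n + b n)
include hd hb hc hu

lemma le_mul_exp_sum_window (n₀ r : ℕ) {i : ℕ} (hi : i ≤ r) :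
    d (n₀ + r) ≤
      (d (n₀ + i) + ∑ j ∈ range r, b (n₀ + j)) * Real.exp (∑ j ∈ range r, c (n₀ + j)) := by
  calc d (n₀ + r)
      ≤ (d (n₀ + i) + ∑ j ∈ Ico (n₀ + i) (n₀ + r), b j) *
          Real.exp (∑ j ∈ Ico (n₀ + i) (n₀ + r), c j) :=
        discrete_gronwall (hd _) (fun n _ => hu n) (fun n _ => hc n) (fun n _ => hb n) (by omega)
    _ ≤ _ := by
      have hb_win := sum_Ico_add_le_sum_range_add hb n₀ i r
      have hb_nonneg : 0 ≤ ∑ j ∈ Ico (n₀ + i) (n₀ + r), b j := sum_nonneg fun j _ => hb j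
      gcongr
      · linarith [hd (n₀ + i)]
      · exact sum_Ico_add_le_sum_range_add hc n₀ i r

lemma card_mul_le_sum_window_mul_exp (n₀ r : ℕ) :
    r * d (n₀ + r) ≤
      (∑ j ∈ range r, d (n₀ + j) + r * ∑ j ∈ range r, b (n₀ + j)) *
        Real.exp (∑ j ∈ range r, c (n₀ + j)) := by
  have := card_nsmul_le_sum (range r) _ _ fun i hi =>
    le_mul_exp_sum_window hd hb hc hu n₀ r (mem_range.mp hi).le
  simpa [nsmul_eq_mul, ← sum_mul, sum_add_distrib] using this

end UniformGronwall

/-- Uniform discrete Gronwall lemma. -/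
theorem stmt_1 (k : ℝ) (hk : 0 < k) (d g h : ℕ → ℝ)
    (hd : ∀ n, 0 ≤ d n) (hg : ∀ n, 0 ≤ g n) (hh : ∀ n, 0 ≤ h n)
    (hrec : ∀ n, (d (n + 1) - d n) / k ≤ g n * d n + h n)
    (r : ℕ) (hr : 0 < r) (a₁ a₂ a₃ : ℝ)
    (hga : ∀ n₀ : ℕ, k * ∑ i ∈ range r, g (n₀ + i) ≤ a₁)
    (hha : ∀ n₀ : ℕ, k * ∑ i ∈ range r, h (n₀ + i) ≤ a₂)
    (hda : ∀ n₀ : ℕ, k * ∑ i ∈ range r, d (n₀ + i) ≤ a₃) :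
    ∀ n, r ≤ n → d n ≤ (a₂ + a₃ / (k * r)) * Real.exp a₁ := by
  intro n hn
  obtain ⟨n₀, rfl⟩ : ∃ n₀, n = n₀ + r := ⟨n - r, by omega⟩
  have hstep : ∀ n, d (n + 1) ≤ (1 + k * g n) * d n + k * h n := fun n => by
    have := (div_le_iff₀ hk).mp (hrec n)
    linarith
  have hwindow := card_mul_le_sum_window_mul_exp hd (fun n => mul_nonneg hk.le (hh n))
    (fun n => mul_nonneg hk.le (hg n)) hstep n₀ r
  simp only [← mul_sum] at hwindow
  have hdsum : ∑ i ∈ range r, d (n₀ + i) ≤ a₃ / k := by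
    rw [le_div_iff₀ hk, mul_comm]; exact hda n₀
  have hr' : (0 : ℝ) < r := by exact_mod_cast hr
  rw [← mul_le_mul_iff_right₀ hr']
  calc (r : ℝ) * d (n₀ + r)
      ≤ (∑ i ∈ range r, d (n₀ + i) + r * (k * ∑ i ∈ range r, h (n₀ + i))) *
          Real.exp (k * ∑ i ∈ range r, g (n₀ + i)) := hwindow
    _ ≤ (a₃ / k + r * a₂) * Real.exp a₁ := by
      have hd_nonneg : 0 ≤ ∑ i ∈ range r, d (n₀ + i) := sum_nonneg fun i _ => hd _
      have hh_nonneg : 0 ≤ k * ∑ i ∈ range r, h (n₀ + i) :=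
        mul_nonneg hk.le (sum_nonneg fun i _ => hh _)
      have hbound : 0 ≤ a₃ / k + r * a₂ := by nlinarith [hha n₀]
      gcongr
      · exact hha n₀
      · exact hga n₀
    _ = r * ((a₂ + a₃ / (k * r)) * Real.exp a₁) := by field_simp; ring
end

section
/- Let U_h, Σ_h be finite-dimensional subspaces of H¹(Ω) and H¹_σ(Ω) respectively, and suppose (u^n_h, σ^n_h) ∈ U_h × Σ_h satisfies the backward Euler scheme: (δ_t u^n_h, ū) + (∇u^n_h, ∇ū) + (u^n_h σ^n_h, ∇ū) = 0 for all ū ∈ U_h, and (δ_t σ^n_h, σ̄) + (B_h σ^n_h, σ̄) − 2(u^n_h ∇u^n_h, σ̄) = 0 for all σ̄ ∈ Σ_h, where δ_t u^n = (u^n − u^{n−1})/k and (B_h σ, σ̄) = (∇·σ, ∇·σ̄) + (rot σ, rot σ̄) + (σ, σ̄). Then the discrete energy law holds: δ_t E(u^n_h, σ^n_h) + (k/2)‖δ_t u^n_h‖₀² + (k/4)‖δ_t σ^n_h‖₀² + ‖∇u^n_h‖₀² + (1/2)‖σ^n_h‖₁² = 0, where E(u,σ) = (1/2)‖u‖₀²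 + (1/4)‖σ‖₀² and ‖σ‖₁² = ‖σ‖₀² + ‖rot σ‖₀² + ‖∇·σ‖₀². In particular E(u^n_h, σ^n_h) ≤ E(u^{n−1}_h, σ^{n−1}_h). -/
open scoped RealInnerProductSpace

lemma polar_aux {V : Type*} [NormedAddCommGroup V] [InnerProductSpace ℝ V] (a b : V) :
    ⟪a - b, a⟫ = (‖a‖ ^ 2 - ‖b‖ ^ 2) / 2 + ‖a - b‖ ^ 2 / 2 := by
  have h := @norm_sub_sq_real V _ _ a b
  have h1 : ⟪a - b, a⟫ = ‖a‖ ^ 2 - ⟪b, a⟫ := by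
    rw [inner_sub_left, real_inner_self_eq_norm_sq]
  have h2 : ⟪a, b⟫ = ⟪b, a⟫ := real_inner_comm b a
  linarith

/-- Discrete energy law for the backward Euler scheme **US**, formulated in an abstract
`L²`-setting: `V` plays the role of scalar `L²`-fields, `W` (resp. `Z`) of vector fields
(resp. of the range of `rot`), `grad`, `div`, `rot` are the differential operators,
`prod u σ` is the pointwise product `u σ`, and `Uh`, `Sh` are the finite element spaces.
The hypothesis `hskew` encodes the `L²`-identity `(u σ, ∇u) = (u ∇u, σ)`. -/
theorem stmt_5 {V W Z : Type*}
    [NormedAddCommGroup V] [InnerProductSpace ℝ V]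
    [NormedAddCommGroup W] [InnerProductSpace ℝ W]
    [NormedAddCommGroup Z] [InnerProductSpace ℝ Z]
    (grad : V →ₗ[ℝ] W) (div : W →ₗ[ℝ] V) (rot : W →ₗ[ℝ] Z)
    (prod : V → W → W)
    (Uh : Submodule ℝ V) (Sh : Submodule ℝ W)
    (k : ℝ) (hk : 0 < k)
    (un un1 : V) (σn σn1 : W)
    (hun : un ∈ Uh) (hun1 : un1 ∈ Uh) (hσn : σn ∈ Sh) (hσn1 : σn1 ∈ Sh)
    (heq1 : ∀ ub ∈ Uh,
      ⟪(1 / k) • (un - un1), ub⟫ + ⟪grad un, grad ub⟫ + ⟪prod un σn, grad ub⟫ = 0)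
    (heq2 : ∀ σb ∈ Sh,
      ⟪(1 / k) • (σn - σn1), σb⟫ +
        (⟪div σn, div σb⟫ + ⟪rot σn, rot σb⟫ + ⟪σn, σb⟫) -
        2 * ⟪prod un (grad un), σb⟫ = 0)
    (hskew : ⟪prod un σn, grad un⟫ = ⟪prod un (grad un), σn⟫) :
    ((1 / 2 * ‖un‖ ^ 2 + 1 / 4 * ‖σn‖ ^ 2) -
        (1 / 2 * ‖un1‖ ^ 2 + 1 / 4 * ‖σn1‖ ^ 2)) / k +
      k / 2 * ‖(1 / k) • (un - un1)‖ ^ 2 + k / 4 * ‖(1 / k) • (σn - σn1)‖ ^ 2 +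
      ‖grad un‖ ^ 2 +
      1 / 2 * (‖σn‖ ^ 2 + ‖rot σn‖ ^ 2 + ‖div σn‖ ^ 2) = 0 ∧
    1 / 2 * ‖un‖ ^ 2 + 1 / 4 * ‖σn‖ ^ 2 ≤ 1 / 2 * ‖un1‖ ^ 2 + 1 / 4 * ‖σn1‖ ^ 2 := by
  have hk0 : k ≠ 0 := ne_of_gt hk
  have E1 := heq1 un hun
  have E2 := heq2 σn hσn
  rw [real_inner_smul_left, polar_aux, real_inner_self_eq_norm_sq] at E1
  rw [real_inner_smul_left, polar_aux, real_inner_self_eq_norm_sq,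
    real_inner_self_eq_norm_sq, real_inner_self_eq_norm_sq] at E2
  have hns1 : ‖(1 / k) • (un - un1)‖ ^ 2 = (1 / k) ^ 2 * ‖un - un1‖ ^ 2 := by
    rw [norm_smul, mul_pow, Real.norm_eq_abs, sq_abs]
  have hns2 : ‖(1 / k) • (σn - σn1)‖ ^ 2 = (1 / k) ^ 2 * ‖σn - σn1‖ ^ 2 := by
    rw [norm_smul, mul_pow, Real.norm_eq_abs, sq_abs]
  have key : ((1 / 2 * ‖un‖ ^ 2 + 1 / 4 * ‖σn‖ ^ 2) -
        (1 / 2 * ‖un1‖ ^ 2 + 1 / 4 * ‖σn1‖ ^ 2)) / k +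
      k / 2 * ‖(1 / k) • (un - un1)‖ ^ 2 + k / 4 * ‖(1 / k) • (σn - σn1)‖ ^ 2 +
      ‖grad un‖ ^ 2 +
      1 / 2 * (‖σn‖ ^ 2 + ‖rot σn‖ ^ 2 + ‖div σn‖ ^ 2) = 0 := by
    rw [hns1, hns2]
    have hkinv : k * k⁻¹ = 1 := mul_inv_cancel₀ hk0
    linear_combination E1 + (1/2) * E2 - hskew +
      ((1/(2*k)) * ‖un - un1‖ ^ 2 + (1/(4*k)) * ‖σn - σn1‖ ^ 2) * hkinv
  refine ⟨key, ?_⟩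
  have h1 : 0 ≤ k / 2 * ‖(1 / k) • (un - un1)‖ ^ 2 := by positivity
  have h2 : 0 ≤ k / 4 * ‖(1 / k) • (σn - σn1)‖ ^ 2 := by positivity
  have h3 : 0 ≤ ‖grad un‖ ^ 2 := by positivity
  have h4 : 0 ≤ 1 / 2 * (‖σn‖ ^ 2 + ‖rot σn‖ ^ 2 + ‖div σn‖ ^ 2) := by positivity
  have hd : ((1 / 2 * ‖un‖ ^ 2 + 1 / 4 * ‖σn‖ ^ 2) -
      (1 / 2 * ‖un1‖ ^ 2 + 1 / 4 * ‖σn1‖ ^ 2)) / k ≤ 0 := by linarith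
  have := (div_nonpos_iff.mp hd)
  rcases this with ⟨h, _⟩ | ⟨h, _⟩
  · linarith [hk.le]
  · linarith
end
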